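/- A countable group G is right-orderable if and only if there exists an injective map t : G → ℝ and a right action of G on ℝ by order-preserving homeomorphisms such that t(gh) = t(g)·h for all g, h ∈ G (i.e., t is equivariant for right multiplication on G). -/

import Mathlib

/-!
Given a right order on `G`, the lexicographic product `G ×ₗ ℚ` is a countable dense linear order
without endpoints, hence order isomorphic to `ℚ` by Cantor's theorem. Right multiplication acts on
the first factor, so it becomes an action of `G` on `ℚ` by order automorphisms, in which
`g ↦ (g, 0)` is equivariant. Each order automorphism `e` of `ℚ` extends uniquely to an order
automorphism `x ↦ sup {e q | q < x}` of `ℝ`, which is a homeomorphism, and uniqueness makes the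
extension compatible with composition. Conversely, an equivariant injection `t` into `ℝ` pulls the
order of `ℝ` back to a right order on `G`.
-/

theorem eq_self_of_monotone_of_ratCast {K : Type*} [Field K] [LinearOrder K] [IsStrictOrderedRing K]
    [Archimedean K] {f : K → K} (hf : Monotone f) (hq : ∀ q : ℚ, f q = q) (x : K) : f x = x :=
  le_antisymm
    (le_of_forall_lt_rat_imp_le fun q hxq => hq q ▸ hf hxq.le)
    (le_of_forall_rat_lt_imp_le fun q hqx => hq q ▸ hf hqx.le)

namespace OrderIso

variable (e : ℚ ≃o ℚ)

noncomputable def extendRealFun (x : ℝ) : ℝ :=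
  sSup ((fun q : ℚ => (e q : ℝ)) '' {q : ℚ | (q : ℝ) < x})

lemma nonempty_image_ratCast_lt (x : ℝ) :
    ((fun q : ℚ => (e q : ℝ)) '' {q : ℚ | (q : ℝ) < x}).Nonempty :=
  let ⟨q, hq⟩ := exists_rat_lt x
  ⟨_, q, hq, rfl⟩

lemma bddAbove_image_ratCast_lt (x : ℝ) :
    BddAbove ((fun q : ℚ => (e q : ℝ)) '' {q : ℚ | (q : ℝ) < x}) := by
  obtain ⟨r, hr⟩ := exists_rat_gt x
  refine ⟨e r, ?_⟩
  rintro _ ⟨q, hq, rfl⟩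
  exact Rat.cast_le.2 (e.monotone (Rat.cast_lt.1 (hq.trans hr)).le)

lemma monotone_extendRealFun : Monotone e.extendRealFun := fun _ y hxy =>
  csSup_le_csSup (e.bddAbove_image_ratCast_lt y) (e.nonempty_image_ratCast_lt _)
    (Set.image_mono fun _ hq => lt_of_lt_of_le hq hxy)

lemma extendRealFun_ratCast (q : ℚ) : e.extendRealFun q = e q := by
  apply le_antisymm
  · refine csSup_le (e.nonempty_image_ratCast_lt _) ?_
    rintro _ ⟨p, hp, rfl⟩
    exact Rat.cast_le.2 (e.monotone (Rat.cast_lt (K := ℝ) |>.1 hp).le)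
  · refine le_of_forall_rat_lt_imp_le fun s hs => le_csSup (e.bddAbove_image_ratCast_lt _) ?_
    exact ⟨e.symm s, show ((e.symm s : ℚ) : ℝ) < q from
      Rat.cast_lt.2 (e.symm_apply_lt.2 (Rat.cast_lt.1 hs)), by simp⟩

lemma extendRealFun_symm_extendRealFun (x : ℝ) : e.symm.extendRealFun (e.extendRealFun x) = x :=
  eq_self_of_monotone_of_ratCast (e.symm.monotone_extendRealFun.comp e.monotone_extendRealFun)
    (fun q => by simp [extendRealFun_ratCast]) x

noncomputable def extendReal : ℝ ≃o ℝ :=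
  ofHomInv ⟨e.extendRealFun, e.monotone_extendRealFun⟩
    ⟨e.symm.extendRealFun, e.symm.monotone_extendRealFun⟩
    (OrderHom.ext _ _ (funext e.symm.extendRealFun_symm_extendRealFun))
    (OrderHom.ext _ _ (funext e.extendRealFun_symm_extendRealFun))

@[simp]
lemma extendReal_ratCast (q : ℚ) : e.extendReal q = e q :=
  e.extendRealFun_ratCast q

lemma extendReal_trans (e' : ℚ ≃o ℚ) (x : ℝ) :
    (e.trans e').extendReal x = e'.extendReal (e.extendReal x) := by
  have : ⇑(e.trans e').extendReal = e'.extendReal ∘ e.extendReal :=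
    Rat.denseRange_cast.equalizer (OrderIso.continuous _)
      ((OrderIso.continuous _).comp (OrderIso.continuous _)) (funext fun q => by simp)
  exact congrFun this x

end OrderIso

theorem exists_equivariant_orderEmbedding_rat (α : Type*) [LinearOrder α] [Countable α]
    [Nonempty α] :
    ∃ (t : α ↪o ℚ) (c : (α ≃o α) → ℚ ≃o ℚ),
      (∀ f f', c (f.trans f') = (c f).trans (c f')) ∧ ∀ f a, t (f a) = c f (t a) := by
  have : Countable (α ×ₗ ℚ) := Countable.of_equiv _ toLex
  obtain ⟨φ⟩ := Order.iso_of_countable_dense (α ×ₗ ℚ) ℚ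
  let t : α ↪o ℚ := OrderEmbedding.ofStrictMono (fun a => φ (toLex (a, 0))) fun _ _ h =>
    φ.strictMono (Prod.Lex.toLex_strictMono (Prod.mk_lt_mk_of_lt_of_le h le_rfl))
  let c (f : α ≃o α) : ℚ ≃o ℚ := φ.symm.trans ((Prod.Lex.prodLexCongr f (.refl ℚ)).trans φ)
  refine ⟨t, c, fun f f' => OrderIso.ext (funext fun q => ?_), fun f a => ?_⟩
  · simp [c, Prod.map_map]
  · simp [t, c, OrderEmbedding.ofStrictMono]

theorem exists_equivariant_orderEmbedding_real (α : Type*) [LinearOrder α] [Countable α]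
    [Nonempty α] :
    ∃ (t : α ↪o ℝ) (c : (α ≃o α) → ℝ ≃o ℝ),
      (∀ f f' x, c (f.trans f') x = c f' (c f x)) ∧ ∀ f a, t (f a) = c f (t a) := by
  obtain ⟨t, c, hc, ht⟩ := exists_equivariant_orderEmbedding_rat α
  exact ⟨t.trans Rat.castOrderEmbedding, fun f => (c f).extendReal,
    fun f f' x => by simp only [hc, OrderIso.extendReal_trans], fun f a => by simp [ht]⟩

/-- A countable group G is right-orderable iff there is an injection t : G → ℝ
and a right action of G on ℝ by order-preserving homeomorphisms with
t(gh) = t(g)·h. -/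
theorem stmt_18 {G : Type*} [Group G] [Countable G] :
    (∃ lt : G → G → Prop,
      (∀ x y z, lt x y → lt y z → lt x z) ∧
      (∀ x, ¬ lt x x) ∧
      (∀ x y, ¬ (lt x y ∧ lt y x)) ∧
      (∀ x y, x ≠ y → lt x y ∨ lt y x) ∧
      (∀ g h f : G, lt g h → lt (g * f) (h * f))) ↔
    (∃ (t : G → ℝ) (ρ : G → (ℝ ≃ₜ ℝ)),
      Function.Injective t ∧
      (∀ g, StrictMono (ρ g)) ∧
      (∀ g h x, ρ (g * h) x = ρ h (ρ g x)) ∧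
      (∀ g h : G, t (g * h) = ρ h (t g))) := by
  constructor
  · rintro ⟨lt, htrans, hirr, -, htot, hmul⟩
    have : IsStrictTotalOrder G lt :=
      { trichotomous := fun a b hab hba => by_contra fun h => (htot a b h).elim hab hba
        irrefl := hirr
        trans := htrans }
    let : LinearOrder G := @linearOrderOfSTO G lt _ (Classical.decRel lt)
    have : MulRightMono G := ⟨fun g a b hab => hab.eq_or_lt.elim (fun h => h ▸ le_rfl)
      fun h => (show a * g < b * g from hmul a b g h).le⟩
    have mulRight_mul (g h : G) :
        OrderIso.mulRight (g * h) = (OrderIso.mulRight g).trans (OrderIso.mulRight h) :=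
      OrderIso.ext (funext fun a => (mul_assoc a g h).symm)
    obtain ⟨t, c, hc, ht⟩ := exists_equivariant_orderEmbedding_real G
    refine ⟨t, fun g => (c (OrderIso.mulRight g)).toHomeomorph, t.injective,
      fun g => (c _).strictMono, fun g h x => ?_, fun g h => ht (OrderIso.mulRight h) g⟩
    simp [mulRight_mul, hc]
  · rintro ⟨t, ρ, ht, hρ, -, hequiv⟩
    refine ⟨fun a b => t a < t b, fun _ _ _ => lt_trans, fun _ => lt_irrefl _,
      fun _ _ h => lt_asymm h.1 h.2, fun _ _ h => (ht.ne h).lt_or_gt,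
      fun g h f hgh => by simpa only [hequiv] using hρ f hgh⟩
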